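/- arXiv:1901.00694 — 4 statements merged into one kernel-verified Lean document; each statement's English description precedes it below -/
import Mathlib

section
/- Let f be a monic polynomial of degree d ≥ 1 with simple (distinct) zeros z_1, …, z_d ∈ ℂ ∖ {0}, and let g be a complex polynomial of degree at most d. For every n ≥ deg(g), the squared distance dist²(g, 𝒫_n·f) := min over polynomials p of degree at most n of ‖g − p f‖²_ω equals \overline{g_Z} · E^{-1} · g_Z^t, where E is the d×d matrix with entries e_{l,m} = k_{n+d}(z_l, z_m), g_Z = (g(z_1), …, g(z_d)), and \overline{g_Z} is its entrywise complex conjugate. -/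
/-- The squared weighted `H²_ω` norm of a polynomial `g = ∑ a_k z^k`,
namely `∑_k |a_k|² ω_k`. -/
noncomputable def wnormSq (ω : ℕ → ℝ) (g : Polynomial ℂ) : ℝ :=
  ∑ k ∈ Finset.range (g.natDegree + 1), ‖g.coeff k‖ ^ 2 * ω k

/-- The partial reproducing kernel `k_m(z,w) = ∑_{k=0}^m \overline{w}^k z^k / ω_k`. -/
noncomputable def wker (ω : ℕ → ℝ) (m : ℕ) (z w : ℂ) : ℂ :=
  ∑ k ∈ Finset.range (m + 1), (starRingEnd ℂ w) ^ k * z ^ k / (ω k : ℂ)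

/-! On polynomials of degree at most `N = n + d`, `wnormSq ω` is the quadratic form of the inner
product `wInner ω N`, in which the kernel polynomials `kerPoly ω N w` reproduce evaluation at `w`.
The combination `K = ∑ c_l K_{z_l}` with `E c = g_Z` interpolates `g` at the zeros of `f`, so
`g - K` is a multiple `p₀ f` with `deg p₀ ≤ n`, while `K` is orthogonal to every such multiple.
Pythagoras makes `K` the best residual, and `‖K‖² = ⟨K, K⟩ = c^* g_Z = g_Z^* E⁻¹ g_Z`.
The Gram matrix `E = B^* diag(1/ω) B`, with `B` a Vandermonde matrix of full column rank, is
positive definite, hence invertible and with Hermitian inverse. -/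
open Polynomial Finset Matrix ComplexConjugate ComplexOrder

noncomputable section

section KernelPolynomials

variable (ω : ℕ → ℝ) (m : ℕ)

def wInner : ℂ[X] →ₗ⋆[ℂ] ℂ[X] →ₗ[ℂ] ℂ :=
  LinearMap.mk₂'ₛₗ (starRingEnd ℂ) (RingHom.id ℂ)
    (fun a b => ∑ k ∈ range (m + 1), conj (a.coeff k) * b.coeff k * ω k)
    (fun _ _ _ => by simp only [coeff_add, map_add, add_mul, sum_add_distrib])
    (fun _ _ _ => by simp only [coeff_smul, smul_eq_mul, map_mul, mul_sum, mul_assoc])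
    (fun _ _ _ => by simp only [coeff_add, mul_add, add_mul, sum_add_distrib])
    (fun _ _ _ => by
      simp only [coeff_smul, smul_eq_mul, RingHom.id_apply, mul_sum]
      exact sum_congr rfl fun _ _ => by ring)

theorem wInner_apply (a b : ℂ[X]) :
    wInner ω m a b = ∑ k ∈ range (m + 1), conj (a.coeff k) * b.coeff k * ω k := rfl

theorem conj_wInner (a b : ℂ[X]) : conj (wInner ω m a b) = wInner ω m b a := by
  simp only [wInner_apply, map_sum, map_mul, Complex.conj_conj, Complex.conj_ofReal]
  exact sum_congr rfl fun k _ => by ring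

theorem ofReal_wnormSq {h : ℂ[X]} (hh : h.natDegree ≤ m) : (wnormSq ω h : ℂ) = wInner ω m h h := by
  have hsupp : wnormSq ω h = ∑ k ∈ range (m + 1), ‖h.coeff k‖ ^ 2 * ω k := by
    refine sum_subset (range_subset_range.2 (by omega)) fun k _ hk => ?_
    rw [mem_range, not_lt] at hk
    simp [coeff_eq_zero_of_natDegree_lt hk]
  rw [hsupp, wInner_apply, Complex.ofReal_sum]
  refine sum_congr rfl fun k _ => ?_
  rw [Complex.ofReal_mul, Complex.ofReal_pow, ← Complex.mul_conj']
  ring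

theorem wnormSq_nonneg (hω : ∀ k, 0 ≤ ω k) (h : ℂ[X]) : 0 ≤ wnormSq ω h :=
  sum_nonneg fun k _ => mul_nonneg (by positivity) (hω k)

theorem wnormSq_add_of_wInner_eq_zero {a b : ℂ[X]} (ha : a.natDegree ≤ m) (hb : b.natDegree ≤ m)
    (hab : wInner ω m a b = 0) : wnormSq ω (a + b) = wnormSq ω a + wnormSq ω b := by
  have hba : wInner ω m b a = 0 := by rw [← conj_wInner, hab, map_zero]
  have hsum := ofReal_wnormSq ω m (natDegree_add_le_of_degree_le ha hb)
  simp only [map_add, LinearMap.add_apply, hab, hba, ← ofReal_wnormSq ω m ha,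
    ← ofReal_wnormSq ω m hb, zero_add, add_zero] at hsum
  exact_mod_cast hsum

theorem isLeast_wnormSq_sub_mul (hω : ∀ k, 0 ≤ ω k) {n : ℕ} {f g K p₀ : ℂ[X]}
    (hfm : n + f.natDegree ≤ m) (hK : K.natDegree ≤ m) (hp₀ : p₀.natDegree ≤ n)
    (hg : g = K + p₀ * f) (horth : ∀ q : ℂ[X], q.natDegree ≤ n → wInner ω m K (q * f) = 0) :
    IsLeast {x | ∃ p : ℂ[X], p.natDegree ≤ n ∧ x = wnormSq ω (g - p * f)} (wnormSq ω K) := by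
  refine ⟨⟨p₀, hp₀, by rw [hg, add_sub_cancel_right]⟩, ?_⟩
  rintro x ⟨p, hp, rfl⟩
  have hq : (p₀ - p).natDegree ≤ n := (natDegree_sub_le _ _).trans (max_le hp₀ hp)
  have hqf : ((p₀ - p) * f).natDegree ≤ m := natDegree_mul_le.trans (by omega)
  rw [show g - p * f = K + (p₀ - p) * f by rw [hg]; ring,
    wnormSq_add_of_wInner_eq_zero ω m hK hqf (horth _ hq)]
  exact le_add_of_nonneg_right (wnormSq_nonneg ω hω _)

def kerPoly (w : ℂ) : ℂ[X] :=
  ∑ k ∈ range (m + 1), C (conj w ^ k / ω k) * X ^ k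

theorem coeff_kerPoly (w : ℂ) (k : ℕ) :
    (kerPoly ω m w).coeff k = if k ≤ m then conj w ^ k / ω k else 0 := by
  simp only [kerPoly, finsetSum_coeff, coeff_C_mul, coeff_X_pow, mul_ite, mul_one, mul_zero,
    sum_ite_eq, mem_range, Nat.lt_succ_iff]

theorem natDegree_kerPoly_le (w : ℂ) : (kerPoly ω m w).natDegree ≤ m :=
  natDegree_le_iff_coeff_eq_zero.2 fun k hk => by
    rw [coeff_kerPoly, if_neg (by omega)]

theorem eval_kerPoly (w x : ℂ) : (kerPoly ω m w).eval x = wker ω m x w := by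
  simp only [kerPoly, eval_finsetSum, eval_mul, eval_C, eval_pow, eval_X, wker]
  exact sum_congr rfl fun k _ => by ring

theorem wInner_kerPoly (hω : ∀ k, ω k ≠ 0) {b : ℂ[X]} (hb : b.natDegree ≤ m) (w : ℂ) :
    wInner ω m (kerPoly ω m w) b = b.eval w := by
  rw [eval_eq_sum_range' (Nat.lt_succ_of_le hb), wInner_apply]
  refine sum_congr rfl fun k hk => ?_
  rw [coeff_kerPoly, if_pos (Nat.lt_succ_iff.1 (mem_range.1 hk)), map_div₀, map_pow,
    Complex.conj_conj, Complex.conj_ofReal]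
  have : (ω k : ℂ) ≠ 0 := Complex.ofReal_ne_zero.2 (hω k)
  field_simp

end KernelPolynomials

section KernelGram

variable (ω : ℕ → ℝ) (m : ℕ) {d : ℕ} (z : Fin d → ℂ)

def kerGram : Matrix (Fin d) (Fin d) ℂ := of fun l j => wker ω m (z l) (z j)

theorem kerGram_eq_conjTranspose_mul_mul :
    kerGram ω m z = (of fun (k : Fin (m + 1)) j => conj (z j) ^ (k : ℕ))ᴴ *
      diagonal (fun k : Fin (m + 1) => (((ω k)⁻¹ : ℝ) : ℂ)) *
        of fun (k : Fin (m + 1)) j => conj (z j) ^ (k : ℕ) := by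
  ext l j
  simp only [kerGram, wker, mul_apply, diagonal_apply, conjTranspose_apply, of_apply, mul_ite,
    mul_zero, sum_ite_eq', mem_univ, if_true, star_pow, Complex.star_def, Complex.conj_conj]
  rw [← Fin.sum_univ_eq_sum_range (fun k => conj (z j) ^ k * z l ^ k / (ω k : ℂ))]
  refine sum_congr rfl fun k _ => ?_
  push_cast
  ring

theorem posDef_kerGram (hω : ∀ k, 0 < ω k) (hz : Function.Injective z) (hdm : d ≤ m + 1) :
    (kerGram ω m z).PosDef := by
  rw [kerGram_eq_conjTranspose_mul_mul]
  refine PosDef.conjTranspose_mul_mul_same (posDef_diagonal_iff.2 fun k => ?_) fun a b hab => ?_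
  · exact_mod_cast inv_pos.2 (hω k)
  rw [← sub_eq_zero]
  refine eq_zero_of_forall_pow_sum_mul_pow_eq_zero ((starRingEnd ℂ).injective.comp hz) fun i => ?_
  have := congrFun hab ⟨i, by omega⟩
  simp only [mulVec, dotProduct, of_apply] at this
  simp only [Pi.sub_apply, sub_mul, sum_sub_distrib, Function.comp_apply, mul_comm (a _),
    mul_comm (b _), this, sub_self]

variable {ω m}

theorem eval_sum_smul_kerPoly (c : Fin d → ℂ) (j : Fin d) :
    (∑ l, c l • kerPoly ω m (z l)).eval (z j) = (kerGram ω m z *ᵥ c) j := by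
  simp only [eval_finsetSum, eval_smul, eval_kerPoly, smul_eq_mul, mulVec, dotProduct, kerGram,
    of_apply, mul_comm]

theorem wInner_sum_smul_kerPoly (hω : ∀ k, ω k ≠ 0) (c : Fin d → ℂ) {b : ℂ[X]}
    (hb : b.natDegree ≤ m) :
    wInner ω m (∑ l, c l • kerPoly ω m (z l)) b = star c ⬝ᵥ fun l => b.eval (z l) := by
  simp only [map_sum, map_smulₛₗ, LinearMap.sum_apply, LinearMap.smul_apply,
    wInner_kerPoly ω m hω hb, dotProduct, Pi.star_apply, smul_eq_mul, RCLike.star_def]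

end KernelGram

theorem prod_X_sub_C_dvd {K ι : Type*} [Field K] [Fintype ι] {z : ι → K}
    (hz : Function.Injective z) {p : K[X]} (hp : ∀ i, p.eval (z i) = 0) : ∏ i, (X - C (z i)) ∣ p :=
  Fintype.prod_dvd_of_coprime (pairwise_coprime_X_sub_C hz) fun i => dvd_iff_isRoot.2 (hp i)

theorem Polynomial.Monic.exists_natDegree_le_of_dvd {R : Type*} [CommRing R] {f h : R[X]}
    (hf : f.Monic) (hdvd : f ∣ h) {n : ℕ} (hh : h.natDegree ≤ n + f.natDegree) :
    ∃ p : R[X], p.natDegree ≤ n ∧ h = p * f := by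
  refine ⟨h /ₘ f, by rw [natDegree_divByMonic _ hf]; omega, ?_⟩
  have := modByMonic_add_div h f
  rw [(modByMonic_eq_zero_iff_dvd hf).2 hdvd, zero_add, mul_comm] at this
  exact this.symm

theorem Matrix.IsHermitian.star_mulVec_dotProduct {ι R : Type*} [Fintype ι] [CommSemiring R]
    [StarRing R] {A : Matrix ι ι R} (hA : A.IsHermitian) (v : ι → R) :
    star (A *ᵥ v) ⬝ᵥ v = star v ⬝ᵥ (A *ᵥ v) := by
  rw [star_mulVec, hA.eq, dotProduct_mulVec]

end

theorem stmt1_general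
    (ω : ℕ → ℝ) (hωpos : ∀ k, 0 < ω k)
    (d : ℕ) (z : Fin d → ℂ)
    (hzinj : Function.Injective z)
    (f : Polynomial ℂ) (hf : f = ∏ i, (Polynomial.X - Polynomial.C (z i)))
    (g : Polynomial ℂ)
    (n : ℕ) (hn : g.natDegree ≤ n)
    (E : Matrix (Fin d) (Fin d) ℂ)
    (hE : ∀ l m, E l m = wker ω (n + d) (z l) (z m)) :
    ∃ D : ℝ,
      IsLeast {x : ℝ | ∃ p : Polynomial ℂ, p.natDegree ≤ n ∧
        x = wnormSq ω (g - p * f)} D ∧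
      (D : ℂ) = ∑ l, ∑ m,
        (starRingEnd ℂ) (g.eval (z l)) * E⁻¹ l m * g.eval (z m) := by
  have hω : ∀ k, ω k ≠ 0 := fun k => (hωpos k).ne'
  have hEgram : kerGram ω (n + d) z = E := Matrix.ext fun l j => (hE l j).symm
  have hEpos : E.PosDef := hEgram ▸ posDef_kerGram ω (n + d) z hωpos hzinj (by omega)
  have hfmonic : f.Monic := hf ▸ monic_prod_of_monic _ _ fun i _ => monic_X_sub_C (z i)
  have hfdeg : f.natDegree = d := by simp [hf]
  have hfz : ∀ i, f.eval (z i) = 0 := fun i => by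
    simp [hf, eval_prod, prod_eq_zero_iff, sub_eq_zero]
  set gZ : Fin d → ℂ := fun l => g.eval (z l)
  set c := E⁻¹ *ᵥ gZ
  set K := ∑ l, c l • kerPoly ω (n + d) (z l)
  have hK : K.natDegree ≤ n + d :=
    natDegree_sum_le_of_forall_le _ _ fun l _ =>
      (natDegree_smul_le _ _).trans (natDegree_kerPoly_le ω _ _)
  have hKz : ∀ j, K.eval (z j) = gZ j := fun j => by
    rw [eval_sum_smul_kerPoly, hEgram, mulVec_mulVec,
      mul_nonsing_inv _ ((isUnit_iff_isUnit_det E).1 hEpos.isUnit), one_mulVec]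
  have hdvd : f ∣ g - K := hf ▸ prod_X_sub_C_dvd hzinj fun i => by simp [hKz, gZ]
  obtain ⟨p₀, hp₀, hgK⟩ := hfmonic.exists_natDegree_le_of_dvd hdvd
    (hfdeg ▸ (natDegree_sub_le g K).trans (max_le (hn.trans (by omega)) hK))
  refine ⟨_, isLeast_wnormSq_sub_mul ω (n + d) (fun k => (hωpos k).le) (by omega) hK hp₀
    (eq_add_of_sub_eq' hgK) fun q hq => ?_, ?_⟩
  · rw [wInner_sum_smul_kerPoly z hω c (natDegree_mul_le.trans (by omega))]
    simp [hfz]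
  · rw [ofReal_wnormSq ω (n + d) hK, wInner_sum_smul_kerPoly z hω c hK, funext hKz,
      hEpos.isHermitian.inv.star_mulVec_dotProduct]
    simp only [dotProduct, mulVec, mul_sum, Pi.star_apply, RCLike.star_def, mul_assoc, gZ]

theorem stmt1
    (ω : ℕ → ℝ) (hω0 : ω 0 = 1) (hωpos : ∀ k, 0 < ω k)
    (hωlim : Filter.Tendsto (fun k => ω k / ω (k + 1)) Filter.atTop (nhds 1))
    (d : ℕ) (hd : 0 < d) (z : Fin d → ℂ)
    (hzinj : Function.Injective z) (hz0 : ∀ i, z i ≠ 0)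
    (f : Polynomial ℂ) (hf : f = ∏ i, (Polynomial.X - Polynomial.C (z i)))
    (g : Polynomial ℂ) (hgd : g.natDegree ≤ d)
    (n : ℕ) (hn : g.natDegree ≤ n)
    (E : Matrix (Fin d) (Fin d) ℂ)
    (hE : ∀ l m, E l m = wker ω (n + d) (z l) (z m)) :
    ∃ D : ℝ,
      IsLeast {x : ℝ | ∃ p : Polynomial ℂ, p.natDegree ≤ n ∧
        x = wnormSq ω (g - p * f)} D ∧
      (D : ℂ) = ∑ l, ∑ m,
        (starRingEnd ℂ) (g.eval (z l)) * E⁻¹ l m * g.eval (z m) :=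
  stmt1_general ω hωpos d z hzinj f hf g n hn E hE
end

section
/- Let f be a monic polynomial of degree d ≥ 1 with simple (distinct) zeros z_1, …, z_d ∈ ℂ ∖ {0}, let n ∈ ℕ, and let p_n be the n-th optimal polynomial approximant to 1/f in H²_ω. Let E be the d×d matrix with entries e_{l,m} = k_{n+d}(z_l, z_m), and set (A_{1,n}, …, A_{d,n})^t = E^{-1} · (1, …, 1)^t. Then ‖1 − p_n f‖²_ω = ∑_{i=1}^d A_{i,n} = (1, …, 1) · E^{-1} · (1, …, 1)^t; in particular ∑_{i=1}^d A_{i,n} is a real number lying in the interval [0, 1]. -/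
/-!
Scaling the `k`-th coefficient by `√ω_k` identifies polynomials of degree `≤ n + d` with
`EuclideanSpace ℂ (Fin (n + d + 1))`, the weighted norm becoming the Euclidean one. There the
kernel polynomials `K_w = k_{n+d}(·, w)` reproduce point evaluation, `⟪K_w, g⟫ = g(w)`, so
`E` is the Gram matrix of `K_{z_1}, …, K_{z_d}`; these are independent (test against Lagrange
polynomials), hence `E` is invertible. Optimality makes `r = 1 - p_n f` orthogonal to every
`q f` with `deg q ≤ n`. The polynomial `r - ∑ A_l K_{z_l}` vanishes at all `z_j` (because
`r(z_j) = 1 = (E A)_j`), so it is such a multiple `q f` and is orthogonal to itself; thus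
`r = ∑ A_l K_{z_l}` and `‖r‖² = ⟪r, ∑ A_l K_{z_l}⟫ = ∑ A_l conj (r(z_l)) = ∑ A_l`.
Comparing with `q = 0` gives `‖r‖² ≤ ‖1‖² = 1`.
-/

open Polynomial Finset
open scoped InnerProductSpace ComplexConjugate ComplexOrder

theorem inner_eq_zero_of_forall_norm_le_norm_sub_smul {𝕜 E : Type*} [RCLike 𝕜]
    [NormedAddCommGroup E] [InnerProductSpace 𝕜 E] {x y : E}
    (h : ∀ t : 𝕜, ‖x‖ ≤ ‖x - t • y‖) : ⟪y, x⟫_𝕜 = 0 := by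
  have hmin : ‖x - 0‖ = ⨅ w : 𝕜 ∙ y, ‖x - w‖ := by
    refine le_antisymm (le_ciInf fun ⟨w, hw⟩ => ?_)
      (ciInf_le ⟨0, fun _ ⟨_, hr⟩ => hr ▸ norm_nonneg _⟩ (0 : 𝕜 ∙ y))
    obtain ⟨t, rfl⟩ := Submodule.mem_span_singleton.mp hw
    simpa using h t
  have horth := (Submodule.norm_eq_iInf_iff_inner_eq_zero _ (Submodule.zero_mem _)).mp hmin y
    (Submodule.mem_span_singleton_self y)
  rw [← inner_conj_symm, ← sub_zero x, horth, map_zero]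

namespace WeightedHardy

variable (ω : ℕ → ℝ) (m : ℕ)

noncomputable def coeffEmbed : ℂ[X] →ₗ[ℂ] EuclideanSpace ℂ (Fin (m + 1)) where
  toFun g := WithLp.toLp 2 fun k => g.coeff k * (√(ω k) : ℂ)
  map_add' g h := by ext k; simp [add_mul]
  map_smul' c g := by ext k; simp [mul_assoc]

noncomputable def kerPoly (w : ℂ) : ℂ[X] :=
  ∑ k ∈ range (m + 1), C (conj w ^ k / ω k) * X ^ k

variable {ω m}

theorem coeffEmbed_apply (g : ℂ[X]) (k : Fin (m + 1)) :
    coeffEmbed ω m g k = g.coeff k * (√(ω k) : ℂ) := rfl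

theorem norm_coeffEmbed_sq (hω : ∀ k, 0 ≤ ω k) {g : ℂ[X]} (hg : g.natDegree ≤ m) :
    ‖coeffEmbed ω m g‖ ^ 2 = wnormSq ω g := by
  have hterm (k : ℕ) : ‖g.coeff k * (√(ω k) : ℂ)‖ ^ 2 = ‖g.coeff k‖ ^ 2 * ω k := by
    rw [norm_mul, mul_pow, Complex.norm_real, Real.norm_eq_abs, sq_abs, Real.sq_sqrt (hω k)]
  simp only [EuclideanSpace.norm_sq_eq, coeffEmbed_apply, hterm, wnormSq]
  rw [Fin.sum_univ_eq_sum_range (fun k => ‖g.coeff k‖ ^ 2 * ω k)]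
  refine (sum_subset (range_subset_range.mpr (by omega)) fun k _ hk => ?_).symm
  rw [coeff_eq_zero_of_natDegree_lt (by simpa using hk)]
  simp

theorem eval_kerPoly (z w : ℂ) : (kerPoly ω m w).eval z = wker ω m z w := by
  simp only [kerPoly, wker, eval_finsetSum, eval_mul, eval_C, eval_pow, eval_X]
  exact sum_congr rfl fun k _ => by ring

theorem natDegree_kerPoly_le (w : ℂ) : (kerPoly ω m w).natDegree ≤ m :=
  natDegree_sum_le_of_forall_le _ _ fun _ hk =>
    (natDegree_C_mul_X_pow_le _ _).trans (Nat.lt_succ_iff.mp (mem_range.mp hk))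

theorem coeff_kerPoly (w : ℂ) {k : ℕ} (hk : k ≤ m) :
    (kerPoly ω m w).coeff k = conj w ^ k / ω k := by
  simp [kerPoly, finsetSum_coeff, Nat.lt_succ_of_le hk]

theorem inner_coeffEmbed_kerPoly (hω : ∀ k, 0 < ω k) (w : ℂ) {g : ℂ[X]}
    (hg : g.natDegree ≤ m) :
    ⟪coeffEmbed ω m (kerPoly ω m w), coeffEmbed ω m g⟫_ℂ = g.eval w := by
  have hterm (k : Fin (m + 1)) : ⟪coeffEmbed ω m (kerPoly ω m w) k, coeffEmbed ω m g k⟫_ℂ =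
      g.coeff k * w ^ (k : ℕ) := by
    have hsq : ((√(ω k) : ℝ) : ℂ) * (√(ω k) : ℝ) = ω k := by
      rw [← Complex.ofReal_mul, Real.mul_self_sqrt (hω k).le]
    have hne : (ω k : ℂ) ≠ 0 := Complex.ofReal_ne_zero.mpr (hω k).ne'
    rw [coeffEmbed_apply, coeffEmbed_apply, coeff_kerPoly w (Nat.lt_succ_iff.mp k.2),
      RCLike.inner_apply']
    simp only [map_mul, map_div₀, map_pow, Complex.conj_conj, Complex.conj_ofReal]
    field_simp
    linear_combination (g.coeff k * w ^ (k : ℕ)) * hsq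
  rw [PiLp.inner_apply, eval_eq_sum_range' (Nat.lt_succ_of_le hg)]
  simp only [hterm]
  exact Fin.sum_univ_eq_sum_range (fun k => g.coeff k * w ^ k) _

theorem inner_coeffEmbed_sum_smul_kerPoly (hω : ∀ k, 0 < ω k) {g : ℂ[X]}
    (hg : g.natDegree ≤ m) {ι : Type*} [Fintype ι] (A z : ι → ℂ) :
    ⟪coeffEmbed ω m g, ∑ l, A l • coeffEmbed ω m (kerPoly ω m (z l))⟫_ℂ =
      ∑ l, A l * conj (g.eval (z l)) := by
  rw [inner_sum]
  refine sum_congr rfl fun l _ => ?_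
  rw [inner_smul_right, ← inner_conj_symm, inner_coeffEmbed_kerPoly hω _ hg]

theorem linearIndependent_coeffEmbed_kerPoly (hω : ∀ k, 0 < ω k) {ι : Type*} [Fintype ι]
    {z : ι → ℂ} (hz : Function.Injective z) (hcard : Fintype.card ι ≤ m + 1) :
    LinearIndependent ℂ fun i => coeffEmbed ω m (kerPoly ω m (z i)) := by
  classical
  refine Fintype.linearIndependent_iff.mpr fun c hc j => ?_
  set L := Lagrange.basis univ z j
  have hL : L.natDegree ≤ m := by
    rw [Lagrange.natDegree_basis hz.injOn (mem_univ j), card_univ]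
    omega
  have hcL := congrArg (fun v => ⟪v, coeffEmbed ω m L⟫_ℂ) hc
  simp only [sum_inner, inner_smul_left, inner_coeffEmbed_kerPoly hω _ hL, inner_zero_left] at hcL
  rw [sum_eq_single j
    (fun i _ hij => by rw [Lagrange.eval_basis_of_ne hij.symm (mem_univ i), mul_zero]) (by simp),
    Lagrange.eval_basis_self hz.injOn (mem_univ j), mul_one] at hcL
  simpa using hcL

theorem gram_coeffEmbed_kerPoly (hω : ∀ k, 0 < ω k) {ι : Type*} (z : ι → ℂ) :
    Matrix.gram ℂ (fun i => coeffEmbed ω m (kerPoly ω m (z i))) =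
      Matrix.of fun i j => wker ω m (z i) (z j) := by
  ext i j
  rw [Matrix.gram, Matrix.of_apply, Matrix.of_apply,
    inner_coeffEmbed_kerPoly hω _ (natDegree_kerPoly_le _), eval_kerPoly]

theorem isUnit_wker_matrix (hω : ∀ k, 0 < ω k) {ι : Type*} [Fintype ι] [DecidableEq ι]
    {z : ι → ℂ} (hz : Function.Injective z) (hcard : Fintype.card ι ≤ m + 1) :
    IsUnit (Matrix.of fun i j => wker ω m (z i) (z j)) :=
  gram_coeffEmbed_kerPoly hω z ▸ (Matrix.posDef_gram_of_linearIndependent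
    (linearIndependent_coeffEmbed_kerPoly hω hz hcard)).isUnit

theorem natDegree_one_sub_mul_le {f q : ℂ[X]} {n : ℕ} (hq : q.natDegree ≤ n) :
    (1 - q * f).natDegree ≤ n + f.natDegree :=
  (natDegree_sub_le _ _).trans <|
    max_le (by simp) (natDegree_mul_le.trans (Nat.add_le_add_right hq _))

theorem inner_coeffEmbed_mul_eq_zero_of_optimal (hω : ∀ k, 0 ≤ ω k) {f p q : ℂ[X]} {n : ℕ}
    (hm : n + f.natDegree ≤ m) (hp : p.natDegree ≤ n)
    (hpopt : ∀ q : ℂ[X], q.natDegree ≤ n →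
      wnormSq ω (1 - p * f) ≤ wnormSq ω (1 - q * f))
    (hq : q.natDegree ≤ n) :
    ⟪coeffEmbed ω m (q * f), coeffEmbed ω m (1 - p * f)⟫_ℂ = 0 := by
  refine inner_eq_zero_of_forall_norm_le_norm_sub_smul fun t => ?_
  have hpt : (p + t • q).natDegree ≤ n :=
    (natDegree_add_le _ _).trans (max_le hp ((natDegree_smul_le _ _).trans hq))
  have hsub : coeffEmbed ω m (1 - p * f) - t • coeffEmbed ω m (q * f) =
      coeffEmbed ω m (1 - (p + t • q) * f) := by
    rw [← map_smul, ← map_sub, add_mul, smul_mul_assoc, sub_sub]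
  rw [hsub, ← sq_le_sq₀ (norm_nonneg _) (norm_nonneg _),
    norm_coeffEmbed_sq hω ((natDegree_one_sub_mul_le hp).trans hm),
    norm_coeffEmbed_sq hω ((natDegree_one_sub_mul_le hpt).trans hm)]
  exact hpopt _ hpt

theorem coeffEmbed_eq_sum_kerPoly (hω : ∀ k, 0 < ω k) {ι : Type*} [Fintype ι] {z : ι → ℂ}
    (hz : Function.Injective z) {n d : ℕ} (hd : Fintype.card ι = d) {r : ℂ[X]}
    (hr : r.natDegree ≤ n + d)
    (horth : ∀ q : ℂ[X], q.natDegree ≤ n →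
      ⟪coeffEmbed ω (n + d) (q * ∏ i, (X - C (z i))), coeffEmbed ω (n + d) r⟫_ℂ = 0)
    (A : ι → ℂ) (hA : ∀ j, r.eval (z j) = ∑ l, wker ω (n + d) (z j) (z l) * A l) :
    coeffEmbed ω (n + d) r = ∑ l, A l • coeffEmbed ω (n + d) (kerPoly ω (n + d) (z l)) := by
  set f : ℂ[X] := ∏ i, (X - C (z i))
  set S := r - ∑ l, A l • kerPoly ω (n + d) (z l)
  have hfm : f.Monic := monic_prod_of_monic _ _ fun i _ => monic_X_sub_C (z i)
  have hfdeg : f.natDegree = d := by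
    rw [natDegree_prod_of_monic _ _ fun i _ => monic_X_sub_C (z i)]
    simp [hd]
  have hSdeg : S.natDegree ≤ n + d :=
    (natDegree_sub_le _ _).trans <| max_le hr <| natDegree_sum_le_of_forall_le _ _ fun l _ =>
      (natDegree_smul_le _ _).trans (natDegree_kerPoly_le _)
  have hfS : f ∣ S := by
    refine Fintype.prod_dvd_of_coprime (pairwise_coprime_X_sub_C hz) fun j => dvd_iff_isRoot.mpr ?_
    simp [S, eval_finsetSum, eval_kerPoly, hA, mul_comm]
  obtain ⟨q, hqdeg, hSq⟩ : ∃ q : ℂ[X], q.natDegree ≤ n ∧ S = q * f := by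
    refine ⟨S /ₘ f, by rw [natDegree_divByMonic S hfm]; omega, ?_⟩
    conv_lhs => rw [← modByMonic_add_div S f, (modByMonic_eq_zero_iff_dvd hfm).mpr hfS]
    ring
  have hqf : ∀ l, ⟪coeffEmbed ω (n + d) (q * f),
      coeffEmbed ω (n + d) (kerPoly ω (n + d) (z l))⟫_ℂ = 0 := fun l => by
    rw [← inner_conj_symm, inner_coeffEmbed_kerPoly hω _ (hSq ▸ hSdeg), eval_mul,
      eval_prod, prod_eq_zero (mem_univ l) (by simp), mul_zero, map_zero]
  have hS0 : ⟪coeffEmbed ω (n + d) (q * f), coeffEmbed ω (n + d) S⟫_ℂ = 0 := by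
    simp only [S, map_sub, map_sum, map_smul, inner_sub_right, inner_sum, inner_smul_right,
      horth q hqdeg, hqf, mul_zero, sum_const_zero, sub_zero]
  rw [← hSq, inner_self_eq_zero, map_sub, sub_eq_zero] at hS0
  simpa [S] using hS0

theorem ofReal_wnormSq_eq_sum (hω : ∀ k, 0 < ω k) {r : ℂ[X]} (hr : r.natDegree ≤ m)
    {ι : Type*} [Fintype ι] {z A : ι → ℂ}
    (hrK : coeffEmbed ω m r = ∑ l, A l • coeffEmbed ω m (kerPoly ω m (z l)))
    (hr1 : ∀ l, r.eval (z l) = 1) :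
    ((wnormSq ω r : ℝ) : ℂ) = ∑ l, A l := by
  rw [← norm_coeffEmbed_sq (fun k => (hω k).le) hr]
  calc ((‖coeffEmbed ω m r‖ ^ 2 : ℝ) : ℂ) = ⟪coeffEmbed ω m r, coeffEmbed ω m r⟫_ℂ := by
        simp [inner_self_eq_norm_sq_to_K]
    _ = ∑ l, A l := by
        rw [congrArg (inner ℂ _) hrK, inner_coeffEmbed_sum_smul_kerPoly hω hr]
        simp [hr1]

theorem wnormSq_nonneg (hω : ∀ k, 0 ≤ ω k) (g : ℂ[X]) : 0 ≤ wnormSq ω g :=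
  sum_nonneg fun k _ => mul_nonneg (sq_nonneg _) (hω k)

theorem wnormSq_one (hω0 : ω 0 = 1) : wnormSq ω 1 = 1 := by
  simp [wnormSq, hω0]

end WeightedHardy

open WeightedHardy in
theorem stmt4_general
    (ω : ℕ → ℝ) (hω0 : ω 0 = 1) (hωpos : ∀ k, 0 < ω k)
    (d : ℕ) (z : Fin d → ℂ)
    (hzinj : Function.Injective z)
    (f : Polynomial ℂ) (hf : f = ∏ i, (Polynomial.X - Polynomial.C (z i)))
    (n : ℕ) (p : Polynomial ℂ) (hpdeg : p.natDegree ≤ n)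
    (hpopt : ∀ q : Polynomial ℂ, q.natDegree ≤ n →
      wnormSq ω (1 - p * f) ≤ wnormSq ω (1 - q * f))
    (E : Matrix (Fin d) (Fin d) ℂ)
    (hE : ∀ l m, E l m = wker ω (n + d) (z l) (z m))
    (A : Fin d → ℂ) (hA : A = E⁻¹.mulVec (fun _ => 1)) :
    ((wnormSq ω (1 - p * f) : ℝ) : ℂ) = ∑ i, A i ∧
    (∑ i, A i) = ∑ l, ∑ m, E⁻¹ l m ∧
    (∑ i, A i).im = 0 ∧ 0 ≤ (∑ i, A i).re ∧ (∑ i, A i).re ≤ 1 := by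
  have hω : ∀ k, 0 ≤ ω k := fun k => (hωpos k).le
  have hfdeg : f.natDegree = d := by
    simp [hf, natDegree_prod_of_monic _ _ fun i _ => monic_X_sub_C (z i)]
  have hEunit : IsUnit E.det := by
    rw [← Matrix.isUnit_iff_isUnit_det]
    convert isUnit_wker_matrix (m := n + d) hωpos hzinj (by simp; omega)
    ext l m
    exact hE l m
  have hEA : E.mulVec A = fun _ => 1 := by
    rw [hA, Matrix.mulVec_mulVec, Matrix.mul_nonsing_inv _ hEunit, Matrix.one_mulVec]
  have hrdeg : (1 - p * f).natDegree ≤ n + d := hfdeg ▸ natDegree_one_sub_mul_le hpdeg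
  have hr1 (j : Fin d) : (1 - p * f).eval (z j) = 1 := by
    simp [hf, eval_prod, prod_eq_zero (mem_univ j)]
  have horth (q : ℂ[X]) (hq : q.natDegree ≤ n) :
      ⟪coeffEmbed ω (n + d) (q * f), coeffEmbed ω (n + d) (1 - p * f)⟫_ℂ = 0 :=
    inner_coeffEmbed_mul_eq_zero_of_optimal hω (by rw [hfdeg]) hpdeg hpopt hq
  have hr := coeffEmbed_eq_sum_kerPoly hωpos hzinj (Fintype.card_fin d) hrdeg (hf ▸ horth) A
    fun j => by simpa [hr1, ← hE, Matrix.mulVec, dotProduct] using (congrFun hEA j).symm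
  have hnorm : ((wnormSq ω (1 - p * f) : ℝ) : ℂ) = ∑ i, A i :=
    ofReal_wnormSq_eq_sum hωpos hrdeg hr hr1
  have hle : wnormSq ω (1 - p * f) ≤ 1 := by
    simpa [wnormSq_one hω0] using hpopt 0 (by simp)
  refine ⟨hnorm, by simp [hA, Matrix.mulVec, dotProduct], ?_⟩
  rw [← hnorm, Complex.ofReal_im, Complex.ofReal_re]
  exact ⟨rfl, wnormSq_nonneg hω _, hle⟩

theorem stmt4
    (ω : ℕ → ℝ) (hω0 : ω 0 = 1) (hωpos : ∀ k, 0 < ω k)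
    (hωlim : Filter.Tendsto (fun k => ω k / ω (k + 1)) Filter.atTop (nhds 1))
    (d : ℕ) (hd : 0 < d) (z : Fin d → ℂ)
    (hzinj : Function.Injective z) (hz0 : ∀ i, z i ≠ 0)
    (f : Polynomial ℂ) (hf : f = ∏ i, (Polynomial.X - Polynomial.C (z i)))
    (n : ℕ) (p : Polynomial ℂ) (hpdeg : p.natDegree ≤ n)
    (hpopt : ∀ q : Polynomial ℂ, q.natDegree ≤ n →
      wnormSq ω (1 - p * f) ≤ wnormSq ω (1 - q * f))
    (E : Matrix (Fin d) (Fin d) ℂ)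
    (hE : ∀ l m, E l m = wker ω (n + d) (z l) (z m))
    (A : Fin d → ℂ) (hA : A = E⁻¹.mulVec (fun _ => 1)) :
    ((wnormSq ω (1 - p * f) : ℝ) : ℂ) = ∑ i, A i ∧
    (∑ i, A i) = ∑ l, ∑ m, E⁻¹ l m ∧
    (∑ i, A i).im = 0 ∧ 0 ≤ (∑ i, A i).re ∧ (∑ i, A i).re ≤ 1 :=
  stmt4_general ω hω0 hωpos d z hzinj f hf n p hpdeg hpopt E hE A hA
end

section
/- Let f be a monic polynomial of degree d ≥ 1 with simple (distinct) zeros z_1, …, z_d, all lying on the unit circle (|z_i| = 1 for all i). For each n ∈ ℕ let E = E_{Z,n} be the d×d matrix with entries e_{l,m} = k_{n+d}(z_l, z_m), and write E^{-1} = (u_{i,j})_{i,j=1}^d. Then there exists a constant C(Z, ω) > 0, independent of n, such that for all n and all i, j, |u_{i,j}| ≤ C(Z, ω) · (∑_{k=0}^n 1/ω_k)^{-1}. -/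
/-!
The quadratic form of `E_n` is `a ↦ ∑_{k ≤ n+d} |∑_l a_l \bar z_l^k|² / ω_k`. Since the `z_l` are
distinct points of the unit circle, the inverse Vandermonde matrix bounds `‖a‖²` by the power sums
over any window of `d` consecutive exponents, uniformly in the window; and since `ω_{k+1}/ω_k` is
bounded, `ω` changes by a bounded factor across a window. Summing over the windows starting at
`k ≤ n` gives the coercivity estimate `‖a‖² ∑_{k≤n} 1/ω_k ≤ C ⟨E_n a, a⟩`. For the `j`-th column `c`
of `E_n⁻¹` we have `⟨E_n c, c⟩ = \bar c_j`, hence `‖c‖ ∑_{k≤n} 1/ω_k ≤ C`.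
-/

open Finset Filter Topology Matrix ComplexConjugate

theorem pi_norm_sq_le_sum_norm_sq {ι E : Type*} [Fintype ι] [SeminormedAddCommGroup E]
    (v : ι → E) : ‖v‖ ^ 2 ≤ ∑ i, ‖v i‖ ^ 2 := by
  rw [← Real.le_sqrt (norm_nonneg v) (by positivity)]
  exact (pi_norm_le_iff_of_nonneg (Real.sqrt_nonneg _)).2 fun i =>
    Real.le_sqrt_of_sq_le (single_le_sum (fun j _ => sq_nonneg ‖v j‖) (mem_univ i))

theorem norm_inv_apply_le_of_coercive {𝕜 ι : Type*} [RCLike 𝕜] [Fintype ι] [DecidableEq ι]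
    {A : Matrix ι ι 𝕜} {s C : ℝ} (hs : 0 < s) (hC : 0 ≤ C)
    (hA : ∀ a, ‖a‖ ^ 2 * s ≤ C * RCLike.re (star a ⬝ᵥ (A *ᵥ a))) (i j : ι) :
    ‖A⁻¹ i j‖ ≤ C * s⁻¹ := by
  by_cases hdet : IsUnit A.det
  swap
  -- coercivity makes `A` invertible, but the junk value `A⁻¹ = 0` satisfies the bound anyway
  · rw [nonsing_inv_apply_not_isUnit A hdet]
    simpa using mul_nonneg hC (inv_nonneg.2 hs.le)
  set c := A⁻¹ *ᵥ Pi.single j 1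
  have hAc : A *ᵥ c = Pi.single j 1 := by
    rw [mulVec_mulVec, mul_nonsing_inv A hdet, one_mulVec]
  have hc : ‖c‖ ^ 2 * s ≤ C * ‖c‖ := by
    calc ‖c‖ ^ 2 * s ≤ C * RCLike.re (star c ⬝ᵥ (A *ᵥ c)) := hA c
      _ = C * RCLike.re (star (c j)) := by rw [hAc, dotProduct_single, mul_one]; rfl
      _ ≤ C * ‖c‖ := by
          gcongr
          exact (RCLike.re_le_norm _).trans ((norm_star _).trans_le (norm_le_pi_norm c j))
  have hcs : ‖c‖ * s ≤ C := by
    rcases (norm_nonneg c).eq_or_lt with h0 | hpos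
    · rw [← h0, zero_mul]; exact hC
    · nlinarith
  calc ‖A⁻¹ i j‖ = ‖c i‖ := by simp [c]
    _ ≤ ‖c‖ := norm_le_pi_norm c i
    _ ≤ C * s⁻¹ := by rw [← div_eq_mul_inv, le_div_iff₀ hs]; exact hcs

theorem exists_succ_le_mul_of_tendsto_div_succ {ω : ℕ → ℝ} (hpos : ∀ k, 0 < ω k)
    (hlim : Tendsto (fun k => ω k / ω (k + 1)) atTop (𝓝 1)) :
    ∃ M, 1 ≤ M ∧ ∀ k, ω (k + 1) ≤ M * ω k := by
  have hinv : Tendsto (fun k => ω (k + 1) / ω k) atTop (𝓝 1) := by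
    simpa using hlim.inv₀ one_ne_zero
  obtain ⟨B, hB⟩ := hinv.bddAbove_range
  refine ⟨max 1 B, le_max_left _ _, fun k => ?_⟩
  rw [← div_le_iff₀ (hpos k)]
  exact (hB ⟨k, rfl⟩).trans (le_max_right _ _)

theorem le_pow_mul_of_succ_le_mul {ω : ℕ → ℝ} {M : ℝ} (hM : 0 ≤ M)
    (h : ∀ k, ω (k + 1) ≤ M * ω k) (k r : ℕ) : ω (k + r) ≤ M ^ r * ω k := by
  induction r with
  | zero => simp
  | succ r ih =>
    calc ω (k + (r + 1)) ≤ M * ω (k + r) := h (k + r)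
      _ ≤ M * (M ^ r * ω k) := by gcongr
      _ = M ^ (r + 1) * ω k := by ring

theorem sum_range_le_of_le_sum_window {y g : ℕ → ℝ} {K : ℝ} {d : ℕ} (hK : 0 ≤ K)
    (hg : ∀ j, 0 ≤ g j) (hy : ∀ k, y k ≤ K * ∑ r ∈ range d, g (k + r)) (n : ℕ) :
    ∑ k ∈ range (n + 1), y k ≤ K * d * ∑ j ∈ range (n + d), g j := by
  have hwindow : ∀ r ∈ range d, ∑ k ∈ range (n + 1), g (k + r) ≤ ∑ j ∈ range (n + d), g j := by
    intro r hr
    have hr : r < d := mem_range.1 hr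
    calc ∑ k ∈ range (n + 1), g (k + r) = ∑ j ∈ Ico r (r + (n + 1)), g j := by
          rw [sum_Ico_eq_sum_range, Nat.add_sub_cancel_left]
          simp only [add_comm]
      _ ≤ ∑ j ∈ range (n + d), g j := by
          rw [range_eq_Ico]
          exact sum_le_sum_of_subset_of_nonneg (Ico_subset_Ico (Nat.zero_le r) (by omega))
            fun j _ _ => hg j
  calc ∑ k ∈ range (n + 1), y k ≤ ∑ k ∈ range (n + 1), K * ∑ r ∈ range d, g (k + r) :=
        sum_le_sum fun k _ => hy k
    _ = K * ∑ r ∈ range d, ∑ k ∈ range (n + 1), g (k + r) := by rw [← mul_sum, sum_comm]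
    _ ≤ K * ∑ r ∈ range d, ∑ j ∈ range (n + d), g j := by gcongr with r hr; exact hwindow r hr
    _ = K * d * ∑ j ∈ range (n + d), g j := by rw [sum_const, card_range, nsmul_eq_mul]; ring

open scoped Matrix.Norms.Operator in
theorem exists_norm_sq_le_sum_norm_sq_power_sum {d : ℕ} {w : Fin d → ℂ}
    (hw : Function.Injective w) (hw1 : ∀ l, ‖w l‖ = 1) :
    ∃ K, 0 < K ∧ ∀ (a : Fin d → ℂ) (k : ℕ),
      ‖a‖ ^ 2 ≤ K * ∑ r ∈ range d, ‖∑ l, a l * w l ^ (k + r)‖ ^ 2 := by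
  set V := (vandermonde w)ᵀ
  have hV : IsUnit V.det := by
    rw [det_transpose]
    exact isUnit_iff_ne_zero.2 (det_vandermonde_ne_zero_iff.2 hw)
  refine ⟨‖V⁻¹‖ ^ 2 + 1, by positivity, fun a k => ?_⟩
  set b : Fin d → ℂ := fun l => a l * w l ^ k
  have hVb : V *ᵥ b = fun r : Fin d => ∑ l, a l * w l ^ (k + (r : ℕ)) := by
    ext r
    simp only [V, b, mulVec, dotProduct, transpose_apply, vandermonde_apply, pow_add]
    exact sum_congr rfl fun l _ => by ring
  have hab : ‖a‖ ≤ ‖b‖ := (pi_norm_le_iff_of_nonneg (norm_nonneg b)).2 fun l =>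
    (by simp [b, hw1] : ‖a l‖ = ‖b l‖) ▸ norm_le_pi_norm b l
  have hbV : ‖b‖ ≤ ‖V⁻¹‖ * ‖V *ᵥ b‖ := by
    calc ‖b‖ = ‖V⁻¹ *ᵥ (V *ᵥ b)‖ := by rw [mulVec_mulVec, nonsing_inv_mul V hV, one_mulVec]
      _ ≤ ‖V⁻¹‖ * ‖V *ᵥ b‖ := linfty_opNorm_mulVec _ _
  calc ‖a‖ ^ 2 ≤ ‖V⁻¹‖ ^ 2 * ‖V *ᵥ b‖ ^ 2 := by
        rw [← mul_pow]; gcongr; exact hab.trans hbV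
    _ ≤ (‖V⁻¹‖ ^ 2 + 1) * ∑ r, ‖(V *ᵥ b) r‖ ^ 2 := by
        gcongr
        · linarith
        · exact pi_norm_sq_le_sum_norm_sq _
    _ = (‖V⁻¹‖ ^ 2 + 1) * ∑ r ∈ range d, ‖∑ l, a l * w l ^ (k + r)‖ ^ 2 := by
        rw [hVb, Fin.sum_univ_eq_sum_range (fun r => ‖∑ l, a l * w l ^ (k + r)‖ ^ 2)]

theorem star_dotProduct_wker_mulVec {ι : Type*} [Fintype ι] (ω : ℕ → ℝ) (m : ℕ) (z a : ι → ℂ) :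
    star a ⬝ᵥ (of (fun l l' => wker ω m (z l) (z l')) *ᵥ a) =
      ((∑ k ∈ range (m + 1), ‖∑ l, a l * conj (z l) ^ k‖ ^ 2 / ω k : ℝ) : ℂ) := by
  have hsq : ∀ k, ((‖∑ l, a l * conj (z l) ^ k‖ ^ 2 : ℝ) : ℂ) =
      (∑ l, conj (a l) * z l ^ k) * ∑ l', a l' * conj (z l') ^ k := by
    intro k
    rw [Complex.ofReal_pow, ← Complex.conj_mul']
    simp [map_sum]
  push_cast
  simp only [← Complex.ofReal_pow, hsq, sum_div, dotProduct, mulVec, of_apply, wker,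
    Pi.star_apply, mul_sum, sum_mul]
  conv_lhs => rw [sum_comm]
  conv_rhs => rw [sum_comm]; enter [2, l]; rw [sum_comm]
  refine sum_congr rfl fun _ _ => sum_congr rfl fun _ _ => sum_congr rfl fun _ _ => ?_
  simp only [RCLike.star_def]
  ring

theorem exists_coercivity_const_wker {ω : ℕ → ℝ} (hpos : ∀ k, 0 < ω k)
    (hlim : Tendsto (fun k => ω k / ω (k + 1)) atTop (𝓝 1)) {d : ℕ} (hd : 0 < d)
    {z : Fin d → ℂ} (hz : Function.Injective z) (hcirc : ∀ l, ‖z l‖ = 1) :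
    ∃ C, 0 < C ∧ ∀ (n : ℕ) (a : Fin d → ℂ),
      ‖a‖ ^ 2 * ∑ k ∈ range (n + 1), (ω k)⁻¹ ≤
        C * ∑ k ∈ range (n + d + 1), ‖∑ l, a l * conj (z l) ^ k‖ ^ 2 / ω k := by
  obtain ⟨M, hM1, hM⟩ := exists_succ_le_mul_of_tendsto_div_succ hpos hlim
  obtain ⟨K, hK, hV⟩ := exists_norm_sq_le_sum_norm_sq_power_sum (w := fun l => conj (z l))
    (star_injective.comp hz) (fun l => by simpa using hcirc l)
  refine ⟨K * M ^ d * d, by positivity, fun n a => ?_⟩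
  set p : ℕ → ℝ := fun k => ‖∑ l, a l * conj (z l) ^ k‖ ^ 2
  have hp : ∀ j, 0 ≤ p j := fun j => sq_nonneg _
  have hwin : ∀ k, ‖a‖ ^ 2 * (ω k)⁻¹ ≤ K * M ^ d * ∑ r ∈ range d, p (k + r) / ω (k + r) := by
    intro k
    have hshift : ∀ r ∈ range d, p (k + r) / ω k ≤ M ^ d * (p (k + r) / ω (k + r)) := by
      intro r hr
      have hωr : ω (k + r) ≤ M ^ d * ω k :=
        (le_pow_mul_of_succ_le_mul (by linarith) hM k r).trans
          (mul_le_mul_of_nonneg_right (pow_le_pow_right₀ hM1 (mem_range.1 hr).le) (hpos k).le)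
      rw [← mul_div_assoc, div_le_div_iff₀ (hpos k) (hpos _)]
      calc p (k + r) * ω (k + r) ≤ p (k + r) * (M ^ d * ω k) := by gcongr
        _ = M ^ d * p (k + r) * ω k := by ring
    calc ‖a‖ ^ 2 * (ω k)⁻¹ ≤ (K * ∑ r ∈ range d, p (k + r)) * (ω k)⁻¹ :=
          mul_le_mul_of_nonneg_right (hV a k) (inv_nonneg.2 (hpos k).le)
      _ = K * ∑ r ∈ range d, p (k + r) / ω k := by simp only [mul_assoc, sum_mul, div_eq_mul_inv]
      _ ≤ K * ∑ r ∈ range d, M ^ d * (p (k + r) / ω (k + r)) := by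
          gcongr with r hr
          exact hshift r hr
      _ = K * M ^ d * ∑ r ∈ range d, p (k + r) / ω (k + r) := by rw [← mul_sum, mul_assoc]
  rw [mul_sum]
  calc ∑ k ∈ range (n + 1), ‖a‖ ^ 2 * (ω k)⁻¹
      ≤ K * M ^ d * d * ∑ j ∈ range (n + d), p j / ω j :=
        sum_range_le_of_le_sum_window (by positivity) (fun j => div_nonneg (hp j) (hpos j).le)
          hwin n
    _ ≤ K * M ^ d * d * ∑ j ∈ range (n + d + 1), p j / ω j := by
        refine mul_le_mul_of_nonneg_left ?_ (by positivity)
        exact sum_le_sum_of_subset_of_nonneg (range_subset_range.2 (by omega))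
          fun j _ _ => div_nonneg (hp j) (hpos j).le

theorem stmt5_general
    (ω : ℕ → ℝ) (hωpos : ∀ k, 0 < ω k)
    (hωlim : Filter.Tendsto (fun k => ω k / ω (k + 1)) Filter.atTop (nhds 1))
    (d : ℕ) (hd : 0 < d) (z : Fin d → ℂ)
    (hzinj : Function.Injective z) (hcirc : ∀ i, ‖z i‖ = 1)
    (E : ℕ → Matrix (Fin d) (Fin d) ℂ)
    (hE : ∀ n l m, E n l m = wker ω (n + d) (z l) (z m)) :
    ∃ C : ℝ, 0 < C ∧ ∀ n : ℕ, ∀ i j : Fin d,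
      ‖(E n)⁻¹ i j‖ ≤ C * (∑ k ∈ Finset.range (n + 1), (ω k)⁻¹)⁻¹ := by
  obtain ⟨C, hC, hcoer⟩ := exists_coercivity_const_wker hωpos hωlim hd hzinj hcirc
  refine ⟨C, hC, fun n i j => norm_inv_apply_le_of_coercive ?_ hC.le (fun a => ?_) i j⟩
  · exact sum_pos (fun k _ => inv_pos.2 (hωpos k)) nonempty_range_add_one
  · have hEn : E n = of fun l m => wker ω (n + d) (z l) (z m) := ext (hE n)
    rw [hEn, star_dotProduct_wker_mulVec, RCLike.re_to_complex, Complex.ofReal_re]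
    exact hcoer n a

theorem stmt5
    (ω : ℕ → ℝ) (hω0 : ω 0 = 1) (hωpos : ∀ k, 0 < ω k)
    (hωlim : Filter.Tendsto (fun k => ω k / ω (k + 1)) Filter.atTop (nhds 1))
    (d : ℕ) (hd : 0 < d) (z : Fin d → ℂ)
    (hzinj : Function.Injective z) (hcirc : ∀ i, ‖z i‖ = 1)
    (f : Polynomial ℂ) (hf : f = ∏ i, (Polynomial.X - Polynomial.C (z i)))
    (E : ℕ → Matrix (Fin d) (Fin d) ℂ)
    (hE : ∀ n l m, E n l m = wker ω (n + d) (z l) (z m)) :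
    ∃ C : ℝ, 0 < C ∧ ∀ n : ℕ, ∀ i j : Fin d,
      ‖(E n)⁻¹ i j‖ ≤ C * (∑ k ∈ Finset.range (n + 1), (ω k)⁻¹)⁻¹ :=
  stmt5_general ω hωpos hωlim d hd z hzinj hcirc E hE
end

section
/- Let f be a complex polynomial with f(0) ≠ 0 whose zeros are simple (distinct) and all satisfy |z| ≥ 1, and for each n ∈ ℕ let p_n be the n-th optimal polynomial approximant to 1/f in the Bergman space A² (weights ω_k = 1/(k+1)). Then there exists a constant C > 0 such that for all n ∈ ℕ, the Wiener norm ∑_k |(1 − p_n f)^(k)| of the polynomial 1 − p_n f (the sum of the absolute values of its coefficients) is at most C. -/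
/-- The squared `A²` (Bergman space) norm of a polynomial `g = ∑ a_k z^k`:
`∑_k |a_k|² / (k+1)` (weights `ω_k = 1/(k+1)`). -/
noncomputable def bergmanNormSq (g : Polynomial ℂ) : ℝ :=
  ∑ k ∈ Finset.range (g.natDegree + 1), ‖g.coeff k‖ ^ 2 / (k + 1)

/-- The Wiener norm of a polynomial: the sum of the absolute values of its
coefficients. -/
noncomputable def wienerNorm (h : Polynomial ℂ) : ℝ :=
  ∑ k ∈ Finset.range (h.natDegree + 1), ‖h.coeff k‖

/-!
Optimality gives `‖1 - pₙ f‖ ≤ ‖1 - q f‖` in `A²` for every `q` of degree `≤ n`, and by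
Cauchy–Schwarz the Wiener norm of a polynomial of degree `< N` is at most its `A²` norm times
`(N (N + 1) / 2)^(1/2)`. As `deg (1 - pₙ f) ≤ n + deg f`, it suffices to find such `q` with
`‖1 - q f‖² = O(1 / n²)`. Take `1 - q f = ∑ ρ, e_ρ Ψ_ρ` over the zeros `ρ` of `f`, where `e_ρ` is
the Lagrange basis polynomial at `ρ` and `Ψ_ρ` the degree-`n` truncation of the Bergman kernel at
`1 / ρ̄`, normalized by `Ψ_ρ(ρ) = 1`. This sum is `1` at every zero, so, the zeros being simple, `f`
divides `1` minus it. Since `|ρ| ≥ 1`, `‖Ψ_ρ‖² ≤ 2 / ((n + 1)(n + 2))`; and multiplying by `e_ρ`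
enlarges `A²` norms at most by the Wiener norm of `e_ρ`, because multiplying by `z` does not
enlarge them.
-/

open Polynomial Finset

theorem sum_range_natDegree_succ_eq {R S : Type*} [Semiring R] [AddCommMonoid S] (g : R[X])
    {φ : ℕ → R → S} (hφ : ∀ k, φ k 0 = 0) {N : ℕ} (hN : g.natDegree < N) :
    ∑ k ∈ range (g.natDegree + 1), φ k (g.coeff k) = ∑ k ∈ range N, φ k (g.coeff k) := by
  rw [← sum_over_range' g hφ _ g.natDegree.lt_succ_self, sum_over_range' g hφ N hN]

theorem bergmanNormSq_eq_sum_range (g : ℂ[X]) {N : ℕ} (hN : g.natDegree < N) :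
    bergmanNormSq g = ∑ k ∈ range N, ‖g.coeff k‖ ^ 2 / (k + 1) :=
  sum_range_natDegree_succ_eq g (φ := fun k a => ‖a‖ ^ 2 / ((k : ℝ) + 1)) (by simp) hN

theorem wienerNorm_eq_sum_range (g : ℂ[X]) {N : ℕ} (hN : g.natDegree < N) :
    wienerNorm g = ∑ k ∈ range N, ‖g.coeff k‖ :=
  sum_range_natDegree_succ_eq g (φ := fun _ a => ‖a‖) (by simp) hN

theorem sq_wienerNorm_le (g : ℂ[X]) {N : ℕ} (hN : g.natDegree < N) :
    wienerNorm g ^ 2 ≤ bergmanNormSq g * ∑ k ∈ range N, ((k : ℝ) + 1) := by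
  rw [wienerNorm_eq_sum_range g hN, bergmanNormSq_eq_sum_range g hN]
  refine sum_sq_le_sum_mul_sum_of_sq_le_mul _ (fun k _ => by positivity) (fun k _ => by positivity)
    fun k _ => ?_
  rw [div_mul_cancel₀ _ (by positivity)]

theorem sum_range_cast_add_one (N : ℕ) : ∑ k ∈ range N, ((k : ℝ) + 1) = N * (N + 1) / 2 := by
  induction N with
  | zero => simp
  | succ N ih => rw [sum_range_succ, ih]; push_cast; ring

theorem sum_range_cast_add_one_pos (n : ℕ) : 0 < ∑ k ∈ range (n + 1), ((k : ℝ) + 1) :=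
  sum_pos (fun _ _ => by positivity) nonempty_range_add_one

theorem sum_range_add_le_sq_mul_sum_range (n d : ℕ) :
    ∑ k ∈ range (n + d + 1), ((k : ℝ) + 1) ≤ (d + 1) ^ 2 * ∑ k ∈ range (n + 1), ((k : ℝ) + 1) := by
  rw [sum_range_cast_add_one, sum_range_cast_add_one]
  push_cast
  have hn : (0 : ℝ) ≤ n := n.cast_nonneg
  have hd : (0 : ℝ) ≤ d := d.cast_nonneg
  have h₁ : (n : ℝ) + d + 1 ≤ (d + 1) * (n + 1) := by nlinarith
  have h₂ : (n : ℝ) + d + 1 + 1 ≤ (d + 1) * (n + 1 + 1) := by nlinarith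
  nlinarith [mul_le_mul h₁ h₂ (by positivity) (by positivity)]

/-- An isometric copy, for the Bergman norm, of the polynomials of degree `< N` in a Hilbert space,
where the triangle inequality is available. -/
noncomputable def bergmanTrunc (N : ℕ) : ℂ[X] →ₗ[ℂ] EuclideanSpace ℂ (Fin N) where
  toFun g := WithLp.toLp 2 fun k => (Real.sqrt (k + 1) : ℂ)⁻¹ * g.coeff k
  map_add' g h := by ext k; simp [mul_add]
  map_smul' c g := by ext k; simp [mul_left_comm]

theorem sq_norm_bergmanTrunc (N : ℕ) (g : ℂ[X]) :
    ‖bergmanTrunc N g‖ ^ 2 = ∑ k ∈ range N, ‖g.coeff k‖ ^ 2 / (k + 1) := by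
  rw [EuclideanSpace.norm_sq_eq, ← Fin.sum_univ_eq_sum_range (fun k => ‖g.coeff k‖ ^ 2 / (k + 1))]
  refine sum_congr rfl fun k _ => ?_
  simp [bergmanTrunc, mul_pow, div_eq_inv_mul, Real.sq_sqrt (by positivity : (0 : ℝ) ≤ k + 1)]

theorem sq_norm_bergmanTrunc_eq {N : ℕ} {g : ℂ[X]} (hN : g.natDegree < N) :
    ‖bergmanTrunc N g‖ ^ 2 = bergmanNormSq g := by
  rw [sq_norm_bergmanTrunc, bergmanNormSq_eq_sum_range g hN]

theorem norm_bergmanTrunc_X_mul_le (N : ℕ) (g : ℂ[X]) :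
    ‖bergmanTrunc N (X * g)‖ ≤ ‖bergmanTrunc N g‖ := by
  refine pow_le_pow_iff_left₀ (norm_nonneg _) (norm_nonneg _) two_ne_zero |>.1 ?_
  rw [sq_norm_bergmanTrunc, sq_norm_bergmanTrunc]
  cases N with
  | zero => simp
  | succ M =>
    rw [sum_range_succ', sum_range_succ]
    simp only [coeff_X_mul, coeff_X_mul_zero, norm_zero, ne_eq, OfNat.ofNat_ne_zero,
      not_false_eq_true, zero_pow, zero_div, add_zero]
    refine le_add_of_le_of_nonneg (sum_le_sum fun i _ => ?_) (by positivity)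
    gcongr
    linarith

theorem norm_bergmanTrunc_X_pow_mul_le (N i : ℕ) (g : ℂ[X]) :
    ‖bergmanTrunc N (X ^ i * g)‖ ≤ ‖bergmanTrunc N g‖ := by
  induction i generalizing g with
  | zero => simp
  | succ i ih =>
    rw [pow_succ, mul_assoc]
    exact (ih (X * g)).trans (norm_bergmanTrunc_X_mul_le N g)

theorem norm_bergmanTrunc_mul_le (N : ℕ) (e g : ℂ[X]) :
    ‖bergmanTrunc N (e * g)‖ ≤ wienerNorm e * ‖bergmanTrunc N g‖ := by
  conv_lhs => rw [e.as_sum_range' (e.natDegree + 1) e.natDegree.lt_succ_self]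
  rw [wienerNorm, sum_mul, sum_mul, map_sum]
  refine (norm_sum_le _ _).trans (sum_le_sum fun i _ => ?_)
  rw [← C_mul_X_pow_eq_monomial, mul_assoc, ← smul_eq_C_mul, map_smul, norm_smul]
  exact mul_le_mul_of_nonneg_left (norm_bergmanTrunc_X_pow_mul_le N i g) (norm_nonneg _)

noncomputable def bergmanNorm (g : ℂ[X]) : ℝ := √(bergmanNormSq g)

theorem bergmanNormSq_nonneg (g : ℂ[X]) : 0 ≤ bergmanNormSq g := by
  unfold bergmanNormSq; positivity

theorem sq_bergmanNorm (g : ℂ[X]) : bergmanNorm g ^ 2 = bergmanNormSq g :=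
  Real.sq_sqrt (bergmanNormSq_nonneg g)

theorem bergmanNorm_eq_norm_bergmanTrunc {N : ℕ} {g : ℂ[X]} (hN : g.natDegree < N) :
    bergmanNorm g = ‖bergmanTrunc N g‖ := by
  rw [bergmanNorm, ← sq_norm_bergmanTrunc_eq hN, Real.sqrt_sq (norm_nonneg _)]

theorem bergmanNorm_add_le (g h : ℂ[X]) : bergmanNorm (g + h) ≤ bergmanNorm g + bergmanNorm h := by
  have hN : ∀ {r : ℂ[X]}, r.natDegree ≤ max g.natDegree h.natDegree →
      r.natDegree < max g.natDegree h.natDegree + 1 := Nat.lt_succ_of_le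
  rw [bergmanNorm_eq_norm_bergmanTrunc (hN (natDegree_add_le g h)),
    bergmanNorm_eq_norm_bergmanTrunc (hN (le_max_left _ _)),
    bergmanNorm_eq_norm_bergmanTrunc (hN (le_max_right _ _)), map_add]
  exact norm_add_le _ _

theorem bergmanNorm_sum_le {ι : Type*} (s : Finset ι) (g : ι → ℂ[X]) :
    bergmanNorm (∑ i ∈ s, g i) ≤ ∑ i ∈ s, bergmanNorm (g i) :=
  le_sum_of_subadditive bergmanNorm (by simp [bergmanNorm, bergmanNormSq]) bergmanNorm_add_le s g

theorem bergmanNorm_mul_le (e g : ℂ[X]) : bergmanNorm (e * g) ≤ wienerNorm e * bergmanNorm g := by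
  have hN : (e * g).natDegree < e.natDegree + g.natDegree + 1 :=
    Nat.lt_succ_of_le natDegree_mul_le
  rw [bergmanNorm_eq_norm_bergmanTrunc hN,
    bergmanNorm_eq_norm_bergmanTrunc (N := e.natDegree + g.natDegree + 1) (by omega)]
  exact norm_bergmanTrunc_mul_le _ e g

/-- The degree-`n` truncation of the Bergman kernel `∑ (k + 1) aᵏ zᵏ = (1 - a z)⁻²`, normalized to
take the value `1` at `a⁻¹`; for `‖a‖ = 1` it is the polynomial of least Bergman norm doing so. -/
noncomputable def bergmanPeak (n : ℕ) (a : ℂ) : ℂ[X] :=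
  ∑ k ∈ range (n + 1), C (((k + 1) / ∑ j ∈ range (n + 1), ((j : ℝ) + 1) : ℝ) * a ^ k) * X ^ k

theorem natDegree_bergmanPeak_le (n : ℕ) (a : ℂ) : (bergmanPeak n a).natDegree ≤ n :=
  natDegree_sum_le_of_forall_le _ _ fun k hk =>
    (natDegree_C_mul_X_pow_le _ k).trans (Nat.lt_succ_iff.1 (mem_range.1 hk))

theorem eval_inv_bergmanPeak (n : ℕ) {a : ℂ} (ha : a ≠ 0) : (bergmanPeak n a).eval a⁻¹ = 1 := by
  simp only [bergmanPeak, eval_finsetSum, eval_mul, eval_C, eval_pow, eval_X, mul_assoc,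
    ← mul_pow, mul_inv_cancel₀ ha, one_pow, mul_one]
  rw [← Complex.ofReal_sum, ← sum_div, div_self (sum_range_cast_add_one_pos n).ne',
    Complex.ofReal_one]

theorem bergmanNormSq_bergmanPeak_le (n : ℕ) {a : ℂ} (ha : ‖a‖ ≤ 1) :
    bergmanNormSq (bergmanPeak n a) ≤ (∑ j ∈ range (n + 1), ((j : ℝ) + 1))⁻¹ := by
  set V := ∑ j ∈ range (n + 1), ((j : ℝ) + 1) with hV
  have hV0 : 0 < V := sum_range_cast_add_one_pos n
  rw [bergmanNormSq_eq_sum_range _ ((natDegree_bergmanPeak_le n a).trans_lt n.lt_succ_self)]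
  calc ∑ k ∈ range (n + 1), ‖(bergmanPeak n a).coeff k‖ ^ 2 / (k + 1)
      ≤ ∑ k ∈ range (n + 1), ((k : ℝ) + 1) / V ^ 2 := sum_le_sum fun k hk => ?_
    _ = V⁻¹ := by rw [← sum_div, ← hV, sq, div_mul_cancel_left₀ hV0.ne']
  have hcoeff : (bergmanPeak n a).coeff k = (((k + 1) / V : ℝ) : ℂ) * a ^ k := by
    simp only [bergmanPeak, finsetSum_coeff, coeff_C_mul_X_pow, sum_ite_eq, if_pos hk, hV]
  have hnorm : ‖(bergmanPeak n a).coeff k‖ ≤ (k + 1) / V := by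
    rw [hcoeff, norm_mul, norm_pow, Complex.norm_real, Real.norm_of_nonneg (by positivity)]
    exact mul_le_of_le_one_right (by positivity) (pow_le_one₀ (norm_nonneg a) ha)
  calc ‖(bergmanPeak n a).coeff k‖ ^ 2 / (k + 1) ≤ ((k + 1) / V) ^ 2 / (k + 1) := by gcongr
    _ = ((k : ℝ) + 1) / V ^ 2 := by field_simp

theorem dvd_of_rootMultiplicity_le_one_of_isRoot {K : Type*} [Field K] [IsAlgClosed K]
    {f g : K[X]} (hf : f ≠ 0) (hsimple : ∀ z, rootMultiplicity z f ≤ 1)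
    (hg : ∀ z, f.IsRoot z → g.IsRoot z) : f ∣ g := by
  classical
  rcases eq_or_ne g 0 with rfl | hg0
  · exact dvd_zero f
  refine (IsAlgClosed.splits f).dvd_of_roots_le_roots hf (Multiset.le_iff_count.2 fun z => ?_)
  rw [count_roots, count_roots]
  by_cases hz : f.IsRoot z
  · exact (hsimple z).trans ((rootMultiplicity_pos hg0).2 (hg z hz))
  · simp [rootMultiplicity_eq_zero hz]

theorem exists_one_sub_mul_eq {K : Type*} [Field K] [IsAlgClosed K] {f Φ : K[X]} {n : ℕ}
    (hf : f ≠ 0) (hsimple : ∀ z, rootMultiplicity z f ≤ 1) (hΦ : ∀ z, f.IsRoot z → Φ.eval z = 1)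
    (hdeg : Φ.natDegree ≤ n + f.natDegree) :
    ∃ q : K[X], q.natDegree ≤ n ∧ 1 - q * f = Φ := by
  obtain ⟨q, hq⟩ := dvd_of_rootMultiplicity_le_one_of_isRoot (g := 1 - Φ) hf hsimple
    fun z hz => by simp [hΦ z hz]
  refine ⟨q, ?_, by rw [mul_comm, ← hq, sub_sub_cancel]⟩
  rcases eq_or_ne q 0 with rfl | hq0
  · simp
  have : f.natDegree + q.natDegree ≤ n + f.natDegree := by
    rw [← natDegree_mul hf hq0, ← hq]
    exact (natDegree_sub_le _ _).trans (by simpa using hdeg)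
  omega

theorem exists_bergmanNormSq_one_sub_mul_le {f : ℂ[X]} (hf : f ≠ 0)
    (hsimple : ∀ z, rootMultiplicity z f ≤ 1) (hroots : ∀ z, f.IsRoot z → 1 ≤ ‖z‖) :
    ∃ A : ℝ, 0 ≤ A ∧ ∀ n : ℕ, ∃ q : ℂ[X], q.natDegree ≤ n ∧
      bergmanNormSq (1 - q * f) ≤ A ^ 2 / ∑ k ∈ range (n + 1), ((k : ℝ) + 1) := by
  set S := f.roots.toFinset
  have hS : ∀ z, z ∈ S ↔ f.IsRoot z := by simp [S, hf]
  set e : ℂ → ℂ[X] := Lagrange.basis S id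
  refine ⟨∑ ρ ∈ S, wienerNorm (e ρ), sum_nonneg fun ρ _ => by unfold wienerNorm; positivity,
    fun n => ?_⟩
  set V := ∑ k ∈ range (n + 1), ((k : ℝ) + 1)
  have hV : 0 < V := sum_range_cast_add_one_pos n
  set Φ := ∑ ρ ∈ S, e ρ * bergmanPeak n ρ⁻¹
  have hΦ : ∀ z, f.IsRoot z → Φ.eval z = 1 := by
    intro z hz
    have hz0 : z ≠ 0 := by rintro rfl; have := hroots 0 hz; norm_num at this
    have hzS := (hS z).2 hz
    rw [eval_finsetSum, sum_eq_single_of_mem z hzS fun ρ _ hρz => by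
      rw [eval_mul, show (e ρ).eval z = 0 from Lagrange.eval_basis_of_ne (v := id) hρz hzS,
        zero_mul]]
    rw [eval_mul, show (e z).eval z = 1 from Lagrange.eval_basis_self (Set.injOn_id _) hzS,
      one_mul]
    simpa using eval_inv_bergmanPeak n (inv_ne_zero hz0)
  have hdeg : Φ.natDegree ≤ n + f.natDegree := by
    refine natDegree_sum_le_of_forall_le _ _ fun ρ hρ => natDegree_mul_le.trans ?_
    have hcard : #S ≤ f.natDegree := (Multiset.toFinset_card_le _).trans (card_roots' f)
    have hpeak := natDegree_bergmanPeak_le n ρ⁻¹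
    rw [Lagrange.natDegree_basis (Set.injOn_id _) hρ]
    omega
  obtain ⟨q, hqn, hq⟩ := exists_one_sub_mul_eq hf hsimple hΦ hdeg
  refine ⟨q, hqn, ?_⟩
  have hpeak : ∀ ρ ∈ S, bergmanNorm (bergmanPeak n ρ⁻¹) ≤ √V⁻¹ := fun ρ hρ =>
    Real.sqrt_le_sqrt (bergmanNormSq_bergmanPeak_le n
      (by simpa using inv_le_one_of_one_le₀ (hroots ρ ((hS ρ).1 hρ))))
  have hΦnorm : bergmanNorm Φ ≤ (∑ ρ ∈ S, wienerNorm (e ρ)) * √V⁻¹ := by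
    rw [sum_mul]
    refine (bergmanNorm_sum_le _ _).trans (sum_le_sum fun ρ hρ => ?_)
    exact (bergmanNorm_mul_le _ _).trans
      (mul_le_mul_of_nonneg_left (hpeak ρ hρ) (by unfold wienerNorm; positivity))
  rw [hq, ← sq_bergmanNorm, div_eq_mul_inv, ← Real.sq_sqrt (inv_nonneg.2 hV.le), ← mul_pow]
  exact pow_le_pow_left₀ (Real.sqrt_nonneg _) hΦnorm 2

theorem stmt7_general
    (f : Polynomial ℂ)
    (hsimple : ∀ z : ℂ, Polynomial.rootMultiplicity z f ≤ 1)
    (hroots : ∀ z : ℂ, f.IsRoot z → 1 ≤ ‖z‖)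
    (p : ℕ → Polynomial ℂ) (hpdeg : ∀ n, (p n).natDegree ≤ n)
    (hpopt : ∀ n, ∀ q : Polynomial ℂ, q.natDegree ≤ n →
      bergmanNormSq (1 - p n * f) ≤ bergmanNormSq (1 - q * f)) :
    ∃ C : ℝ, 0 < C ∧ ∀ n : ℕ, wienerNorm (1 - p n * f) ≤ C := by
  have hf : f ≠ 0 := by rintro rfl; have := hroots 0 (by simp); norm_num at this
  obtain ⟨A, hA, happrox⟩ := exists_bergmanNormSq_one_sub_mul_le hf hsimple hroots
  set d := f.natDegree
  refine ⟨(d + 1) * A + 1, by positivity, fun n => ?_⟩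
  obtain ⟨q, hqn, hq⟩ := happrox n
  have hdeg : (1 - p n * f).natDegree < n + d + 1 :=
    Nat.lt_succ_of_le <| (natDegree_sub_le _ _).trans <| max_le (by simp) <|
      natDegree_mul_le.trans (Nat.add_le_add_right (hpdeg n) d)
  have hV := sum_range_cast_add_one_pos n
  have hsq : wienerNorm (1 - p n * f) ^ 2 ≤ ((d + 1) * A) ^ 2 :=
    calc wienerNorm (1 - p n * f) ^ 2
        ≤ bergmanNormSq (1 - p n * f) * ∑ k ∈ range (n + d + 1), ((k : ℝ) + 1) :=
          sq_wienerNorm_le _ hdeg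
      _ ≤ A ^ 2 / (∑ k ∈ range (n + 1), ((k : ℝ) + 1)) *
            ((d + 1) ^ 2 * ∑ k ∈ range (n + 1), ((k : ℝ) + 1)) :=
          mul_le_mul ((hpopt n q hqn).trans hq) (sum_range_add_le_sq_mul_sum_range n d)
            (sum_nonneg fun _ _ => by positivity) (by positivity)
      _ = ((d + 1) * A) ^ 2 := by field_simp
  linarith [(abs_le_of_sq_le_sq' hsq (by positivity)).2]

theorem stmt7
    (f : Polynomial ℂ) (hf0 : f.eval 0 ≠ 0)
    (hsimple : ∀ z : ℂ, Polynomial.rootMultiplicity z f ≤ 1)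
    (hroots : ∀ z : ℂ, f.IsRoot z → 1 ≤ ‖z‖)
    (p : ℕ → Polynomial ℂ) (hpdeg : ∀ n, (p n).natDegree ≤ n)
    (hpopt : ∀ n, ∀ q : Polynomial ℂ, q.natDegree ≤ n →
      bergmanNormSq (1 - p n * f) ≤ bergmanNormSq (1 - q * f)) :
    ∃ C : ℝ, 0 < C ∧ ∀ n : ℕ, wienerNorm (1 - p n * f) ≤ C :=
  stmt7_general f hsimple hroots p hpdeg hpopt
end
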